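/- arXiv:1902.09224 — 4 statements merged into one kernel-verified Lean document; each statement's English description precedes it below -/
import Mathlib

section
/- For each positive integer k, the constant A_k := (6/π²) Σ_{ℓ powerful, f(ℓ) = k − 1} 1/ψ(ℓ) satisfies A_k = (6/π²) Σ_{n=1}^∞ ρ_k(n)/ψ(n), where both series converge. -/
open Finset
open scoped Classical

/-- Number of distinct exponents in the prime factorization of `n`. -/
noncomputable def fexp (n : ℕ) : ℕ :=
  (n.primeFactors.image fun p => n.factorization p).card

/-- `n` is powerful if every prime dividing `n` divides it at least twice. -/
def Powerful (n : ℕ) : Prop :=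
  0 < n ∧ ∀ p : ℕ, p.Prime → p ∣ n → p ^ 2 ∣ n

/-- Dedekind `ψ` function, as a real number. -/
noncomputable def dedekindPsi (n : ℕ) : ℝ :=
  (n : ℝ) * ∏ p ∈ n.primeFactors, (1 + 1 / (p : ℝ))

noncomputable def rho : ℕ → ℕ → ℝ
  | 0, _ => 0
  | 1, n => if n = 1 then 1 else 0
  | (k + 2), n =>
      if n = 1 ∨ ¬ Squarefree n then 0
      else (1 / ((n : ℝ) - 1)) * ∑ d ∈ n.divisors.filter (· < n), rho (k + 1) d

/-- `g(n) = ω(n) - f(n)`. -/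
noncomputable def gexp (n : ℕ) : ℕ := n.primeFactors.card - fexp n

/-- `n` is special if all exponents in its prime factorization are distinct. -/
noncomputable def Special (n : ℕ) : Prop := fexp n = n.primeFactors.card

/-
Every powerful `ℓ` is `n * rad n` for a unique `n ≥ 1`, with `f ℓ = f n` and
`ψ ℓ = n ψ(rad n)`. Grouping by `m = rad n`, the sum over powerful `ℓ` with `f ℓ = K` becomes
`∑ₘ S_K(m) / ψ(m)`, where `S_K(m) = ∑_{rad n = m, f n = K} 1/n`, so it suffices that
`S_K = ρ_{K+1}`. For squarefree `m > 1`, `n ↦ n / m` identifies `{n : rad n = m}` with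
`{n' : rad n' ∣ m}`, and `f (n' m)` is `f n'` if `rad n' = m` and `f n' + 1` otherwise. Hence
`m S_{K+1}(m) = S_{K+1}(m) + ∑_{d ∣ m, d < m} S_K(d)`, the recursion defining `ρ_{K+2}`.
All rearrangements happen in `ℝ≥0∞`; the sums are finite because every powerful number is
`c² a³`, so `∑_{ℓ powerful} 1/ℓ ≤ ζ(2) ζ(3)`.
-/

open UniqueFactorizationMonoid ENNReal

namespace Nat

lemma radical_eq_radical_iff {a b : ℕ} :
    radical a = radical b ↔ a.primeFactors = b.primeFactors := by
  simpa [primeFactors_eq_natPrimeFactors] using radical_eq_iff_primeFactors_eq (a := a) (b := b)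

lemma radical_of_squarefree {m : ℕ} (hm : Squarefree m) : radical m = m := by
  rw [radical_eq_prod_primeFactors, prod_primeFactors_of_squarefree hm]

lemma radical_eq_of_squarefree_iff {n m : ℕ} (hm : Squarefree m) :
    radical n = m ↔ n.primeFactors = m.primeFactors := by
  conv_lhs => rw [← radical_of_squarefree hm]
  exact radical_eq_radical_iff

lemma primeFactors_mul_of_subset {n m : ℕ} (hn : n ≠ 0) (hm : m ≠ 0)
    (h : n.primeFactors ⊆ m.primeFactors) : (n * m).primeFactors = m.primeFactors := by
  rw [primeFactors_mul hn hm, Finset.union_eq_right.mpr h]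

lemma Prime.dvd_of_sq_dvd_mul_squarefree {p n r : ℕ} (hp : p.Prime) (hr : Squarefree r)
    (h : p ^ 2 ∣ n * r) : p ∣ n := by
  by_contra hpn
  have hcop : Coprime (p ^ 2) n := ((Prime.coprime_iff_not_dvd hp).mpr hpn).pow_left 2
  exact hp.one_lt.ne' (Nat.isUnit_iff.mp (hr p (sq p ▸ hcop.dvd_of_dvd_mul_left h)))

end Nat

lemma fexp_mul_squarefree {n m : ℕ} (hm : Squarefree m) (hn : n ≠ 0)
    (h : n.primeFactors ⊆ m.primeFactors) :
    fexp (n * m) = fexp n + if n.primeFactors = m.primeFactors then 0 else 1 := by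
  have hshift : ∀ p ∈ m.primeFactors, (n * m).factorization p = n.factorization p + 1 := by
    intro p hp
    rw [Nat.factorization_mul hn hm.ne_zero, Finsupp.add_apply,
      Nat.factorization_eq_one_of_squarefree hm (Nat.prime_of_mem_primeFactors hp)
        (Nat.dvd_of_mem_primeFactors hp)]
  have hcard : (n.primeFactors.image fun p => n.factorization p + 1).card = fexp n := by
    rw [fexp]
    symm
    rw [← Finset.card_image_of_injective _ (add_left_injective 1), Finset.image_image]
    rfl
  rw [fexp, Nat.primeFactors_mul_of_subset hn hm.ne_zero h, Finset.image_congr hshift]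
  split_ifs with heq
  · rw [← heq, hcard, add_zero]
  -- the primes of `m` missing from `n` contribute the new exponent `1`
  have hD : (m.primeFactors \ n.primeFactors).Nonempty :=
    Finset.sdiff_nonempty.mpr fun h' => heq (h.antisymm h')
  have hone : ∀ p ∈ m.primeFactors \ n.primeFactors, n.factorization p + 1 = 1 := by
    intro p hp
    rw [Finset.mem_sdiff, ← Nat.support_factorization n] at hp
    rw [Finsupp.notMem_support_iff.mp hp.2]
  rw [← Finset.union_sdiff_of_subset h, Finset.image_union, Finset.image_congr hone,
    Finset.image_const hD, Finset.card_union_of_disjoint, hcard, Finset.card_singleton]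
  rw [Finset.disjoint_singleton_right, Finset.mem_image]
  rintro ⟨p, hp, hp1⟩
  rw [← Nat.support_factorization, Finsupp.mem_support_iff] at hp
  omega

lemma eq_one_of_fexp_eq_zero {n : ℕ} (hn : n ≠ 0) (h : fexp n = 0) : n = 1 := by
  rw [fexp, Finset.card_eq_zero, Finset.image_eq_empty, Nat.primeFactors_eq_empty] at h
  omega

lemma primeFactors_mul_radical {n : ℕ} (hn : n ≠ 0) :
    (n * radical n).primeFactors = n.primeFactors := by
  rw [Nat.primeFactors_mul_of_subset hn radical_ne_zero (Nat.primeFactors_radical n).ge,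
    Nat.primeFactors_radical]

lemma radical_mul_radical (n : ℕ) : radical (n * radical n) = radical n := by
  rcases eq_or_ne n 0 with rfl | hn
  · simp
  · rw [Nat.radical_eq_radical_iff, primeFactors_mul_radical hn]

lemma mul_radical_injective : Function.Injective fun n : ℕ => n * radical n := by
  intro a b h
  have hrad : radical a = radical b := by
    rw [← radical_mul_radical a, ← radical_mul_radical b]
    exact congrArg radical h
  simp only [hrad] at h
  exact Nat.eq_of_mul_eq_mul_right (Nat.radical_pos b) h

lemma fexp_mul_radical (n : ℕ) : fexp (n * radical n) = fexp n := by
  rcases eq_or_ne n 0 with rfl | hn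
  · simp
  · rw [fexp_mul_squarefree squarefree_radical hn (Nat.primeFactors_radical n).ge,
      if_pos (Nat.primeFactors_radical n).symm, add_zero]

lemma powerful_iff_exists_mul_radical {ℓ : ℕ} : Powerful ℓ ↔ ∃ n ≠ 0, n * radical n = ℓ := by
  constructor
  · intro h
    have hdvd : radical ℓ ∣ ℓ := radical_dvd_self
    have hquot : ℓ / radical ℓ ≠ 0 :=
      (Nat.div_pos (Nat.le_of_dvd h.1 hdvd) (Nat.radical_pos ℓ)).ne'
    have hrad : radical (ℓ / radical ℓ) = radical ℓ := by
      rw [Nat.radical_eq_radical_iff]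
      refine (Nat.primeFactors_mono (Nat.div_dvd_of_dvd hdvd) h.1.ne').antisymm fun p hp => ?_
      have hp' := Nat.mem_primeFactors.mp hp
      have hsq : p ^ 2 ∣ ℓ / radical ℓ * radical ℓ := by
        rw [Nat.div_mul_cancel hdvd]
        exact h.2 p hp'.1 hp'.2.1
      exact Nat.mem_primeFactors.mpr
        ⟨hp'.1, hp'.1.dvd_of_sq_dvd_mul_squarefree squarefree_radical hsq, hquot⟩
    exact ⟨ℓ / radical ℓ, hquot, by rw [hrad, Nat.div_mul_cancel hdvd]⟩
  · rintro ⟨n, hn, rfl⟩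
    refine ⟨Nat.pos_of_ne_zero (mul_ne_zero hn radical_ne_zero), fun p hp hpd => ?_⟩
    have hpn : p ∣ n := (hp.dvd_mul.mp hpd).elim id fun h => h.trans radical_dvd_self
    rw [sq]
    exact mul_dvd_mul hpn ((dvd_radical_iff_of_irreducible hp.prime.irreducible hn).mpr hpn)

lemma exists_sq_mul_cube_of_powerful {ℓ : ℕ} (h : Powerful ℓ) :
    ∃ c a : ℕ, (c + 1) ^ 2 * (a + 1) ^ 3 = ℓ := by
  obtain ⟨a, b, hℓ, ha⟩ := Nat.sq_mul_squarefree_of_pos' h.1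
  have hab : a + 1 ∣ b + 1 := by
    rw [← Nat.radical_of_squarefree ha, Nat.radical_dvd_iff b.succ_ne_zero]
    intro p hp
    have hp' := Nat.mem_primeFactors.mp hp
    have hsq : p ^ 2 ∣ (b + 1) ^ 2 * (a + 1) :=
      hℓ ▸ h.2 p hp'.1 (hp'.2.1.trans (hℓ ▸ dvd_mul_left _ _))
    exact Nat.mem_primeFactors.mpr ⟨hp'.1,
      hp'.1.dvd_of_dvd_pow (hp'.1.dvd_of_sq_dvd_mul_squarefree ha hsq), b.succ_ne_zero⟩
  obtain ⟨c, hc⟩ := hab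
  obtain ⟨c, rfl⟩ : ∃ c', c = c' + 1 := Nat.exists_eq_succ_of_ne_zero (by rintro rfl; simp at hc)
  exact ⟨c, a, by rw [← hℓ, hc]; ring⟩

lemma ENNReal.tsum_inv_succ_pow_ne_top {p : ℕ} (hp : 2 ≤ p) :
    ∑' n : ℕ, ((n + 1 : ℝ≥0∞) ^ p)⁻¹ ≠ ∞ := by
  have hsum : Summable fun n : ℕ => (((n + 1 : ℕ) : ℝ) ^ p)⁻¹ :=
    (summable_nat_add_iff 1).mpr (Real.summable_nat_pow_inv.mpr hp)
  have hterm (n : ℕ) : ((n + 1 : ℝ≥0∞) ^ p)⁻¹ = ENNReal.ofReal ((((n + 1 : ℕ) : ℝ) ^ p)⁻¹) := by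
    rw [ENNReal.ofReal_inv_of_pos (by positivity), ENNReal.ofReal_pow (by positivity),
      ENNReal.ofReal_natCast, Nat.cast_succ]
  rw [tsum_congr hterm, ← ENNReal.ofReal_tsum_of_nonneg (fun n => by positivity) hsum]
  exact ENNReal.ofReal_ne_top

lemma tsum_powerful_inv_ne_top : ∑' ℓ : ℕ, (if Powerful ℓ then (ℓ : ℝ≥0∞)⁻¹ else 0) ≠ ∞ := by
  set φ : ℕ × ℕ → ℕ := fun x => (x.1 + 1) ^ 2 * (x.2 + 1) ^ 3
  have hsupp : (Function.support fun ℓ : ℕ => if Powerful ℓ then (ℓ : ℝ≥0∞)⁻¹ else 0) ⊆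
      Set.range φ := by
    intro ℓ hℓ
    by_cases h : Powerful ℓ
    · obtain ⟨c, a, h⟩ := exists_sq_mul_cube_of_powerful h
      exact ⟨(c, a), h⟩
    · simp [h] at hℓ
  refine ne_top_of_le_ne_top (mul_ne_top (tsum_inv_succ_pow_ne_top le_rfl)
    (tsum_inv_succ_pow_ne_top (by norm_num : 2 ≤ 3))) ?_
  calc ∑' ℓ : ℕ, (if Powerful ℓ then (ℓ : ℝ≥0∞)⁻¹ else 0)
      = ∑' ℓ : Set.range φ, (if Powerful ℓ then (ℓ : ℝ≥0∞)⁻¹ else 0) :=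
        (tsum_subtype_eq_of_support_subset hsupp).symm
    _ ≤ ∑' x : ℕ × ℕ, (if Powerful (φ x) then (φ x : ℝ≥0∞)⁻¹ else 0) :=
        ENNReal.tsum_le_tsum_comp_of_surjective Set.rangeFactorization_surjective
          fun ℓ : Set.range φ => if Powerful ℓ then (ℓ : ℝ≥0∞)⁻¹ else 0
    _ ≤ ∑' x : ℕ × ℕ, ((x.1 + 1 : ℝ≥0∞) ^ 2)⁻¹ * ((x.2 + 1 : ℝ≥0∞) ^ 3)⁻¹ := by
        refine ENNReal.tsum_le_tsum fun x => ?_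
        split_ifs
        · rw [← ENNReal.mul_inv (by simp) (by simp)]
          simp [φ]
        · exact zero_le
    _ = (∑' c : ℕ, ((c + 1 : ℝ≥0∞) ^ 2)⁻¹) * ∑' a : ℕ, ((a + 1 : ℝ≥0∞) ^ 3)⁻¹ := by
        rw [ENNReal.tsum_prod', ← ENNReal.tsum_mul_right]
        simp_rw [← ENNReal.tsum_mul_left]

lemma dedekindPsi_nonneg (n : ℕ) : 0 ≤ dedekindPsi n := by
  unfold dedekindPsi
  positivity

lemma natCast_le_dedekindPsi (n : ℕ) : (n : ℝ) ≤ dedekindPsi n :=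
  le_mul_of_one_le_right n.cast_nonneg
    (Finset.one_le_prod fun _ _ => le_add_of_nonneg_right (by positivity))

lemma dedekindPsi_mul_radical (n : ℕ) :
    dedekindPsi (n * radical n) = n * dedekindPsi (radical n) := by
  rcases eq_or_ne n 0 with rfl | hn
  · simp [dedekindPsi]
  · rw [dedekindPsi, dedekindPsi, primeFactors_mul_radical hn, Nat.primeFactors_radical]
    push_cast
    ring

lemma rho_nonneg : ∀ k n : ℕ, 0 ≤ rho k n
  | 0, _ => le_rfl
  | 1, n => by
    simp only [rho]
    split_ifs <;> norm_num
  | k + 2, n => by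
    rw [rho]
    split_ifs with h
    · exact le_rfl
    · have hn : (1 : ℝ) ≤ n :=
        Nat.one_le_cast.mpr (Nat.pos_of_ne_zero (not_not.mp (not_or.mp h).2).ne_zero)
      exact mul_nonneg (one_div_nonneg.mpr (sub_nonneg.mpr hn))
        (Finset.sum_nonneg fun d _ => rho_nonneg (k + 1) d)

-- `n ≠ 0` is needed: `radical 0 = 1` and `(0 : ℝ≥0∞)⁻¹ = ∞`.
noncomputable def radicalFiberInvSum (K m : ℕ) : ℝ≥0∞ :=
  ∑' n : ℕ, if radical n = m ∧ n ≠ 0 ∧ fexp n = K then (n : ℝ≥0∞)⁻¹ else 0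

lemma radicalFiberInvSum_ne_top (K m : ℕ) : radicalFiberInvSum K m ≠ ∞ := by
  refine ne_top_of_le_ne_top (mul_ne_top (natCast_ne_top m) tsum_powerful_inv_ne_top) ?_
  calc radicalFiberInvSum K m
      ≤ ∑' n : ℕ, m * (if Powerful (n * radical n)
          then ((n * radical n : ℕ) : ℝ≥0∞)⁻¹ else 0) := by
        refine ENNReal.tsum_le_tsum fun n => ?_
        split_ifs with h h'
        · obtain ⟨rfl, hn, -⟩ := h
          rw [Nat.cast_mul, ENNReal.mul_inv (by simp) (by simp), mul_left_comm,
            ENNReal.mul_inv_cancel (by simp) (by simp), mul_one]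
        · exact absurd (powerful_iff_exists_mul_radical.mpr ⟨n, h.2.1, rfl⟩) h'
        · exact zero_le
        · exact zero_le
    _ ≤ m * ∑' ℓ : ℕ, (if Powerful ℓ then (ℓ : ℝ≥0∞)⁻¹ else 0) := by
        rw [ENNReal.tsum_mul_left]
        exact mul_le_mul_right (ENNReal.tsum_comp_le_tsum_of_injective mul_radical_injective
          fun ℓ => if Powerful ℓ then (ℓ : ℝ≥0∞)⁻¹ else 0) _

lemma radicalFiberInvSum_zero (m : ℕ) : radicalFiberInvSum 0 m = ENNReal.ofReal (rho 1 m) := by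
  rw [radicalFiberInvSum, tsum_eq_single 1]
  · simp only [rho]
    split_ifs <;> simp_all [fexp]
  · intro n hn
    rw [if_neg]
    rintro ⟨-, h0, hf⟩
    exact hn (eq_one_of_fexp_eq_zero h0 hf)

lemma radicalFiberInvSum_succ_eq_zero {K m : ℕ} (h : m = 1 ∨ ¬Squarefree m) :
    radicalFiberInvSum (K + 1) m = 0 := by
  refine ENNReal.tsum_eq_zero.mpr fun n => if_neg ?_
  rintro ⟨rfl, hn, hf⟩
  rcases h with h | h
  · obtain rfl : n = 1 := by have := Nat.radical_eq_one_iff.mp h; omega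
    simp [fexp] at hf
  · exact h squarefree_radical

lemma mul_radicalFiberInvSum_succ_term {m : ℕ} (hm : Squarefree m) (K n : ℕ) :
    (m : ℝ≥0∞) * (if radical (n * m) = m ∧ n * m ≠ 0 ∧ fexp (n * m) = K + 1
        then ((n * m : ℕ) : ℝ≥0∞)⁻¹ else 0) =
      (if radical n = m ∧ n ≠ 0 ∧ fexp n = K + 1 then (n : ℝ≥0∞)⁻¹ else 0) +
        ∑ d ∈ m.divisors.filter (· < m),
          if radical n = d ∧ n ≠ 0 ∧ fexp n = K then (n : ℝ≥0∞)⁻¹ else 0 := by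
  rcases eq_or_ne n 0 with rfl | hn
  · simp
  have hinv : (m : ℝ≥0∞) * ((n * m : ℕ) : ℝ≥0∞)⁻¹ = (n : ℝ≥0∞)⁻¹ := by
    rw [Nat.cast_mul, ENNReal.mul_inv (by simp) (by simp), mul_left_comm,
      ENNReal.mul_inv_cancel (by simpa using hm.ne_zero) (by simp), mul_one]
  have hmul : radical (n * m) = m ↔ n.primeFactors ⊆ m.primeFactors := by
    rw [Nat.radical_eq_of_squarefree_iff hm, Nat.primeFactors_mul hn hm.ne_zero,
      Finset.union_eq_right]
  have hproper : radical n ∈ m.divisors.filter (· < m) ↔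
      n.primeFactors ⊆ m.primeFactors ∧ n.primeFactors ≠ m.primeFactors := by
    rw [Finset.mem_filter, Nat.mem_divisors, ← Nat.radical_dvd_iff hm.ne_zero,
      ← (Nat.radical_eq_of_squarefree_iff hm).ne]
    exact ⟨fun h => ⟨h.1.1, h.2.ne⟩, fun h => ⟨⟨h.1, hm.ne_zero⟩,
      (Nat.le_of_dvd (Nat.pos_of_ne_zero hm.ne_zero) h.1).lt_of_ne h.2⟩⟩
  simp only [ite_and, Finset.sum_ite_eq, hproper, hmul, Nat.radical_eq_of_squarefree_iff hm,
    mul_ne_zero hn hm.ne_zero, hn, ne_eq, not_false_eq_true, if_true]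
  by_cases hsub : n.primeFactors ⊆ m.primeFactors
  · rw [fexp_mul_squarefree hm hn hsub]
    split_ifs <;> simp_all
  · have hne : n.primeFactors ≠ m.primeFactors := fun h => hsub h.subset
    simp [hsub, hne]

lemma mul_radicalFiberInvSum_succ {m : ℕ} (hm : Squarefree m) (K : ℕ) :
    m * radicalFiberInvSum (K + 1) m =
      radicalFiberInvSum (K + 1) m + ∑ d ∈ m.divisors.filter (· < m), radicalFiberInvSum K d := by
  have hsupp : (Function.support fun n : ℕ =>
      if radical n = m ∧ n ≠ 0 ∧ fexp n = K + 1 then (n : ℝ≥0∞)⁻¹ else 0) ⊆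
      Set.range (· * m) := by
    intro n hn
    have hrad : radical n = m := by
      by_contra h
      simp [h] at hn
    exact ⟨n / m, Nat.div_mul_cancel (hrad ▸ radical_dvd_self)⟩
  conv_lhs => rw [radicalFiberInvSum, ← (mul_left_injective₀ hm.ne_zero).tsum_eq hsupp,
    ← ENNReal.tsum_mul_left, tsum_congr (mul_radicalFiberInvSum_succ_term hm K), ENNReal.tsum_add,
    Summable.tsum_finsetSum fun _ _ => ENNReal.summable]
  rfl

lemma ENNReal.eq_div_sub_one_of_mul_eq_add {c x s : ℝ≥0∞} (hx : x ≠ ∞) (hc : 1 < c)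
    (hc' : c ≠ ∞) (h : c * x = x + s) : x = s / (c - 1) := by
  rw [ENNReal.eq_div_iff (tsub_pos_of_lt hc).ne' (ENNReal.sub_ne_top hc'),
    ENNReal.sub_mul fun _ _ => hx, one_mul, h, ENNReal.add_sub_cancel_left hx]

theorem radicalFiberInvSum_eq_ofReal_rho (K m : ℕ) :
    radicalFiberInvSum K m = ENNReal.ofReal (rho (K + 1) m) := by
  induction K generalizing m with
  | zero => exact radicalFiberInvSum_zero m
  | succ K ih =>
    rw [rho]
    split_ifs with h
    · rw [radicalFiberInvSum_succ_eq_zero h, ENNReal.ofReal_zero]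
    obtain ⟨hm1, hm⟩ := not_or.mp h
    rw [not_not] at hm
    have hm2 : 2 ≤ m := by have := hm.ne_zero; omega
    have hm2' : (1 : ℝ) < m := by exact_mod_cast hm2
    rw [ENNReal.eq_div_sub_one_of_mul_eq_add (radicalFiberInvSum_ne_top _ _)
      (by exact_mod_cast hm2) (natCast_ne_top m) (mul_radicalFiberInvSum_succ hm K)]
    simp only [ih]
    rw [← ENNReal.ofReal_sum_of_nonneg fun d _ => rho_nonneg _ _, ENNReal.div_eq_inv_mul,
      ENNReal.ofReal_mul (one_div_nonneg.mpr (sub_nonneg.mpr hm2'.le)), one_div,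
      ENNReal.ofReal_inv_of_pos (sub_pos.mpr hm2'), ENNReal.ofReal_sub _ zero_le_one,
      ENNReal.ofReal_natCast, ENNReal.ofReal_one]

lemma ENNReal.tsum_mul_comp_eq_tsum_mul_fiber {β γ : Type*} (g : β → γ) (h : γ → ℝ≥0∞)
    (u : β → ℝ≥0∞) : ∑' b, h (g b) * u b = ∑' c, h c * ∑' b, if g b = c then u b else 0 := by
  simp_rw [← ENNReal.tsum_mul_left]
  rw [ENNReal.tsum_comm]
  refine tsum_congr fun b => ?_
  simp [mul_ite]

theorem tsum_ofReal_powerful_eq (K : ℕ) :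
    ∑' ℓ : ℕ, ENNReal.ofReal (if Powerful ℓ ∧ fexp ℓ = K then 1 / dedekindPsi ℓ else 0) =
      ∑' m : ℕ, ENNReal.ofReal (rho (K + 1) m / dedekindPsi m) := by
  have hsupp : (Function.support fun ℓ : ℕ =>
      ENNReal.ofReal (if Powerful ℓ ∧ fexp ℓ = K then 1 / dedekindPsi ℓ else 0)) ⊆
      Set.range fun n => n * radical n := by
    intro ℓ hℓ
    by_cases h : Powerful ℓ ∧ fexp ℓ = K
    · obtain ⟨n, -, hn⟩ := powerful_iff_exists_mul_radical.mp h.1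
      exact ⟨n, hn⟩
    · simp [h] at hℓ
  have hterm (n : ℕ) :
      ENNReal.ofReal (if Powerful (n * radical n) ∧ fexp (n * radical n) = K
        then 1 / dedekindPsi (n * radical n) else 0) =
      ENNReal.ofReal (1 / dedekindPsi (radical n)) *
        if n ≠ 0 ∧ fexp n = K then (n : ℝ≥0∞)⁻¹ else 0 := by
    rcases eq_or_ne n 0 with rfl | hn
    · simp [Powerful]
    simp only [powerful_iff_exists_mul_radical.mpr ⟨n, hn, rfl⟩, fexp_mul_radical,
      dedekindPsi_mul_radical, true_and, hn, ne_eq, not_false_eq_true]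
    split_ifs
    · rw [← one_div_mul_one_div, ENNReal.ofReal_mul (Nat.one_div_cast_nonneg n),
        ENNReal.ofReal_div_of_pos (Nat.cast_pos.mpr (Nat.pos_of_ne_zero hn)),
        ENNReal.ofReal_one, ENNReal.ofReal_natCast, one_div, mul_comm]
    · simp
  calc ∑' ℓ : ℕ, ENNReal.ofReal (if Powerful ℓ ∧ fexp ℓ = K then 1 / dedekindPsi ℓ else 0)
      = ∑' n : ℕ, ENNReal.ofReal (1 / dedekindPsi (radical n)) *
          if n ≠ 0 ∧ fexp n = K then (n : ℝ≥0∞)⁻¹ else 0 :=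
        (mul_radical_injective.tsum_eq hsupp).symm.trans (tsum_congr hterm)
    _ = ∑' m : ℕ, ENNReal.ofReal (1 / dedekindPsi m) * radicalFiberInvSum K m := by
        rw [ENNReal.tsum_mul_comp_eq_tsum_mul_fiber radical
          fun m => ENNReal.ofReal (1 / dedekindPsi m)]
        simp only [radicalFiberInvSum, ite_and]
    _ = ∑' m : ℕ, ENNReal.ofReal (rho (K + 1) m / dedekindPsi m) := by
        refine tsum_congr fun m => ?_
        rw [radicalFiberInvSum_eq_ofReal_rho, ← ENNReal.ofReal_mul
          (one_div_nonneg.mpr (dedekindPsi_nonneg m)), one_div_mul_eq_div]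

lemma tsum_ofReal_powerful_ne_top (K : ℕ) :
    ∑' ℓ : ℕ, ENNReal.ofReal (if Powerful ℓ ∧ fexp ℓ = K then 1 / dedekindPsi ℓ else 0) ≠ ∞ := by
  refine ne_top_of_le_ne_top tsum_powerful_inv_ne_top (ENNReal.tsum_le_tsum fun ℓ => ?_)
  split_ifs with h h'
  · have hℓ : (0 : ℝ) < ℓ := Nat.cast_pos.mpr h.1.1
    rw [← ENNReal.ofReal_natCast, ← ENNReal.ofReal_inv_of_pos hℓ, ← one_div]
    exact ENNReal.ofReal_le_ofReal (one_div_le_one_div_of_le hℓ (natCast_le_dedekindPsi ℓ))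
  · exact absurd h.1 h'
  all_goals simp

lemma summable_and_tsum_eq_of_tsum_ofReal_eq {ι κ : Type*} {f : ι → ℝ} {g : κ → ℝ}
    (hf : ∀ i, 0 ≤ f i) (hg : ∀ j, 0 ≤ g j)
    (h : ∑' i, ENNReal.ofReal (f i) = ∑' j, ENNReal.ofReal (g j))
    (hfin : ∑' i, ENNReal.ofReal (f i) ≠ ∞) :
    Summable f ∧ Summable g ∧ ∑' i, f i = ∑' j, g j := by
  have hsf : Summable f :=
    (ENNReal.summable_toReal hfin).congr fun i => ENNReal.toReal_ofReal (hf i)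
  have hsg : Summable g :=
    (ENNReal.summable_toReal (h ▸ hfin)).congr fun j => ENNReal.toReal_ofReal (hg j)
  refine ⟨hsf, hsg, ?_⟩
  rw [← ENNReal.ofReal_tsum_of_nonneg hf hsf, ← ENNReal.ofReal_tsum_of_nonneg hg hsg] at h
  exact (ENNReal.ofReal_eq_ofReal_iff (tsum_nonneg hf) (tsum_nonneg hg)).mp h

theorem stmt_2 (k : ℕ) (hk : 1 ≤ k) :
    Summable (fun ℓ : ℕ => if Powerful ℓ ∧ fexp ℓ = k - 1 then 1 / dedekindPsi ℓ else 0) ∧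
    Summable (fun n : ℕ => rho k (n + 1) / dedekindPsi (n + 1)) ∧
    6 / Real.pi ^ 2 *
        (∑' ℓ : ℕ, if Powerful ℓ ∧ fexp ℓ = k - 1 then 1 / dedekindPsi ℓ else 0) =
      6 / Real.pi ^ 2 * ∑' n : ℕ, rho k (n + 1) / dedekindPsi (n + 1) := by
  obtain ⟨K, rfl⟩ : ∃ K, k = K + 1 := ⟨k - 1, by omega⟩
  rw [Nat.add_sub_cancel]
  obtain ⟨hsum_powerful, hsum_rho, heq⟩ := summable_and_tsum_eq_of_tsum_ofReal_eq
    (fun ℓ => ite_nonneg (one_div_nonneg.mpr (dedekindPsi_nonneg ℓ)) le_rfl)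
    (fun m => div_nonneg (rho_nonneg _ _) (dedekindPsi_nonneg m))
    (tsum_ofReal_powerful_eq K) (tsum_ofReal_powerful_ne_top K)
  refine ⟨hsum_powerful, (summable_nat_add_iff 1).mpr hsum_rho, ?_⟩
  rw [heq, hsum_rho.tsum_eq_zero_add]
  simp [dedekindPsi]
end

section
/- There exists a constant C > 0 such that for all real x ≥ 1, the number of powerful natural numbers not exceeding x is at most C x^{1/2}. -/
open Finset
open scoped Classical

/-! Every powerful number is `a ^ 2 * b ^ 3`. For fixed `b ≤ N` there are at most `√(N / b ^ 3)`
choices of `a` with `a ^ 2 * b ^ 3 ≤ N`, and `∑ b, √(N / b ^ 3) ≤ ζ(3/2) √N`. -/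

/-- In `n = m ^ 2 * s` with `s` squarefree, powerfulness forces `s ∣ m`. -/
theorem Powerful.exists_eq_sq_mul_cube {n : ℕ} (hn : Powerful n) :
    ∃ a b : ℕ, n = a ^ 2 * b ^ 3 := by
  obtain ⟨s, m, rfl, hs⟩ := Nat.sq_mul_squarefree n
  have hm : m ≠ 0 := by rintro rfl; simp [Powerful] at hn
  have hsm : s.primeFactors ⊆ m.primeFactors := by
    intro p hp
    have hp' := Nat.prime_of_mem_primeFactors hp
    refine Nat.mem_primeFactors.mpr ⟨hp', ?_, hm⟩
    by_contra hpm
    have hsq : p ^ 2 ∣ m ^ 2 * s :=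
      hn.2 p hp' (dvd_mul_of_dvd_right (Nat.dvd_of_mem_primeFactors hp) _)
    have hcop : (p ^ 2).Coprime (m ^ 2) := Nat.Coprime.pow 2 2 ((hp'.coprime_iff_not_dvd).mpr hpm)
    have hpp : p * p ∣ s := by simpa [sq] using hcop.dvd_of_dvd_mul_left hsq
    exact hp'.one_lt.ne' (Nat.isUnit_iff.mp (hs p hpp))
  obtain ⟨c, rfl⟩ : s ∣ m := by
    nth_rw 1 [← Nat.prod_primeFactors_of_squarefree hs]
    exact (Finset.prod_dvd_prod_of_subset _ _ id hsm).trans (Nat.prod_primeFactors_dvd _)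
  exact ⟨c, s, by ring⟩

theorem filter_powerful_subset_image (N : ℕ) :
    (Icc 1 N).filter Powerful ⊆
      ((Icc 1 N).sigma fun b => Icc 1 (Nat.sqrt (N / b ^ 3))).image fun x => x.2 ^ 2 * x.1 ^ 3 := by
  intro n hn
  obtain ⟨⟨hn1, hnN⟩, hpow⟩ : (1 ≤ n ∧ n ≤ N) ∧ Powerful n := by simpa using hn
  obtain ⟨a, b, rfl⟩ := hpow.exists_eq_sq_mul_cube
  have ha : 0 < a := Nat.pos_of_ne_zero (by rintro rfl; simp at hn1)
  have hb : 0 < b := Nat.pos_of_ne_zero (by rintro rfl; simp at hn1)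
  refine mem_image.mpr ⟨⟨b, a⟩, mem_sigma.mpr ⟨mem_Icc.mpr ⟨hb, ?_⟩, mem_Icc.mpr ⟨ha, ?_⟩⟩, rfl⟩
  · calc b ≤ b ^ 3 := Nat.le_self_pow (by norm_num) b
      _ ≤ a ^ 2 * b ^ 3 := Nat.le_mul_of_pos_left _ (by positivity)
      _ ≤ N := hnN
  · rw [Nat.le_sqrt, Nat.le_div_iff_mul_le (by positivity), ← sq]
    exact hnN

theorem card_filter_powerful_le_sum (N : ℕ) :
    #((Icc 1 N).filter Powerful) ≤ ∑ b ∈ Icc 1 N, Nat.sqrt (N / b ^ 3) := by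
  calc #((Icc 1 N).filter Powerful)
      ≤ #(((Icc 1 N).sigma fun b => Icc 1 (Nat.sqrt (N / b ^ 3))).image
          fun x => x.2 ^ 2 * x.1 ^ 3) := card_le_card (filter_powerful_subset_image N)
    _ ≤ #((Icc 1 N).sigma fun b => Icc 1 (Nat.sqrt (N / b ^ 3))) := card_image_le
    _ = ∑ b ∈ Icc 1 N, Nat.sqrt (N / b ^ 3) := by
      simp only [card_sigma, Nat.card_Icc, Nat.add_sub_cancel]

theorem natSqrt_div_pow_three_le (N b : ℕ) :
    (Nat.sqrt (N / b ^ 3) : ℝ) ≤ (N : ℝ) ^ ((1 : ℝ) / 2) * (b : ℝ) ^ (-(3 / 2) : ℝ) := by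
  have hb : (0 : ℝ) ≤ b := Nat.cast_nonneg b
  calc (Nat.sqrt (N / b ^ 3) : ℝ) ≤ Real.sqrt ((N / b ^ 3 : ℕ) : ℝ) := Real.nat_sqrt_le_real_sqrt
    _ ≤ Real.sqrt ((N : ℝ) / (b : ℝ) ^ 3) := Real.sqrt_le_sqrt (by exact_mod_cast Nat.cast_div_le)
    _ = (N : ℝ) ^ ((1 : ℝ) / 2) * (b : ℝ) ^ (-(3 / 2) : ℝ) := by
      rw [Real.sqrt_eq_rpow, Real.div_rpow (Nat.cast_nonneg N) (by positivity), Real.rpow_neg hb,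
        ← Real.rpow_natCast, ← Real.rpow_mul hb, div_eq_mul_inv]
      norm_num

theorem card_filter_powerful_le (N : ℕ) :
    (#((Icc 1 N).filter Powerful) : ℝ) ≤
      (∑' b : ℕ, (b : ℝ) ^ (-(3 / 2) : ℝ)) * (N : ℝ) ^ ((1 : ℝ) / 2) := by
  have hsum : Summable fun b : ℕ => (b : ℝ) ^ (-(3 / 2) : ℝ) :=
    Real.summable_nat_rpow.mpr (by norm_num)
  calc (#((Icc 1 N).filter Powerful) : ℝ) ≤ ∑ b ∈ Icc 1 N, (Nat.sqrt (N / b ^ 3) : ℝ) := by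
        exact_mod_cast card_filter_powerful_le_sum N
    _ ≤ ∑ b ∈ Icc 1 N, (N : ℝ) ^ ((1 : ℝ) / 2) * (b : ℝ) ^ (-(3 / 2) : ℝ) :=
        sum_le_sum fun b _ => natSqrt_div_pow_three_le N b
    _ = (∑ b ∈ Icc 1 N, (b : ℝ) ^ (-(3 / 2) : ℝ)) * (N : ℝ) ^ ((1 : ℝ) / 2) := by
        rw [sum_mul]; exact sum_congr rfl fun _ _ => mul_comm _ _
    _ ≤ (∑' b : ℕ, (b : ℝ) ^ (-(3 / 2) : ℝ)) * (N : ℝ) ^ ((1 : ℝ) / 2) := by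
        gcongr
        exact hsum.sum_le_tsum _ fun b _ => by positivity

theorem stmt_5 :
    ∃ C : ℝ, 0 < C ∧ ∀ x : ℝ, 1 ≤ x →
      (((Finset.Icc 1 ⌊x⌋₊).filter fun n => Powerful n).card : ℝ) ≤ C * x ^ ((1 : ℝ) / 2) := by
  have hsum : Summable fun b : ℕ => (b : ℝ) ^ (-(3 / 2) : ℝ) :=
    Real.summable_nat_rpow.mpr (by norm_num)
  refine ⟨∑' b : ℕ, (b : ℝ) ^ (-(3 / 2) : ℝ),
    hsum.tsum_pos (fun b => by positivity) 1 (by norm_num), fun x hx => ?_⟩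
  calc (#((Icc 1 ⌊x⌋₊).filter Powerful) : ℝ)
      ≤ (∑' b : ℕ, (b : ℝ) ^ (-(3 / 2) : ℝ)) * (⌊x⌋₊ : ℝ) ^ ((1 : ℝ) / 2) :=
        card_filter_powerful_le _
    _ ≤ (∑' b : ℕ, (b : ℝ) ^ (-(3 / 2) : ℝ)) * x ^ ((1 : ℝ) / 2) := by
      gcongr
      exact Nat.floor_le (by linarith)
end

section
/- Let k be a positive integer, let a_0 be an integer, and let x_1, …, x_k be real numbers each greater than 1. Then Σ_{a_0 < a_1 < ⋯ < a_k} 1/(x_1^{a_1} ⋯ x_k^{a_k}) = (1/(x_1 ⋯ x_k)^{a_0}) ∏_{j=1}^k 1/(x_j x_{j+1} ⋯ x_k − 1), where the sum is over all integer tuples (a_1, …, a_k) with a_0 < a_1 < ⋯ < a_k. -/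
open Finset
open scoped Classical

lemma geom_above (a₀ : ℤ) {y : ℝ} (hy : 1 < y) :
    HasSum (fun n : {m : ℤ // a₀ < m} => 1 / y ^ (n.1 : ℤ))
      (1 / y ^ a₀ * (1 / (y - 1))) := by
  have hy0 : (0:ℝ) < y := lt_trans one_pos hy
  have hyne : y ≠ 0 := ne_of_gt hy0
  let e : ℕ ≃ {m : ℤ // a₀ < m} :=
    { toFun := fun n => ⟨a₀ + 1 + n, by omega⟩
      invFun := fun m => (m.1 - a₀ - 1).toNat
      left_inv := fun n => by simp only []; omega
      right_inv := fun m => by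
        ext
        have := m.2
        simp only []
        omega }
  rw [← e.hasSum_iff]
  have h1 : HasSum (fun n : ℕ => (1 / y ^ (a₀ + 1)) * (1 / y) ^ n)
      ((1 / y ^ (a₀ + 1)) * (1 - 1 / y)⁻¹) :=
    (hasSum_geometric_of_lt_one (by positivity) (by
      rw [div_lt_one hy0]; exact hy)).mul_left _
  have hfun : ((fun n : {m : ℤ // a₀ < m} => 1 / y ^ (n.1 : ℤ)) ∘ e) =
      fun n : ℕ => (1 / y ^ (a₀ + 1)) * (1 / y) ^ n := by
    funext n
    show 1 / y ^ (a₀ + 1 + (n : ℤ)) = _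
    rw [zpow_add₀ hyne, zpow_natCast y n, div_pow, one_pow]
    field_simp
  have hval : (1 / y ^ (a₀ + 1)) * (1 - 1 / y)⁻¹ = 1 / y ^ a₀ * (1 / (y - 1)) := by
    have hne : y - 1 ≠ 0 := by nlinarith
    rw [zpow_add₀ hyne, zpow_one]
    have : 1 - 1 / y = (y - 1) / y := by field_simp
    rw [this]
    field_simp
  rw [hfun, ← hval]
  exact h1

lemma Ici_succ_map {k : ℕ} (j : Fin k) :
    (Finset.Ici j.succ : Finset (Fin (k+1))) =
      (Finset.Ici j).map ⟨Fin.succ, Fin.succ_injective k⟩ := by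
  ext a
  simp only [Finset.mem_Ici, Finset.mem_map, Function.Embedding.coeFn_mk]
  constructor
  · intro h
    induction a using Fin.cases with
    | zero => exact absurd h (by simp [Fin.le_def])
    | succ a' => exact ⟨a', by simpa [Fin.succ_le_succ_iff] using h, rfl⟩
  · rintro ⟨b, hb, rfl⟩
    exact Fin.succ_le_succ_iff.mpr hb

lemma prod_Ici_succ {k : ℕ} (x : Fin (k+1) → ℝ) (j : Fin k) :
    ∏ i ∈ Finset.Ici j.succ, x i = ∏ i ∈ Finset.Ici j, x i.succ := by
  rw [Ici_succ_map, Finset.prod_map]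
  rfl

lemma Ici_zero_fin {k : ℕ} : (Finset.Ici (0 : Fin (k+1))) = Finset.univ := by
  ext a; simp [Fin.zero_le]

def tailEquiv (k : ℕ) (a₀ : ℤ) :
    {a : Fin (k+1) → ℤ // StrictMono a ∧ ∀ i, a₀ < a i} ≃
      Σ m : {m : ℤ // a₀ < m}, {b : Fin k → ℤ // StrictMono b ∧ ∀ i, m.1 < b i} where
  toFun a := ⟨⟨a.1 0, a.2.2 0⟩, ⟨fun i => a.1 i.succ,
    a.2.1.comp Fin.strictMono_succ, fun i => a.2.1 (Fin.succ_pos i)⟩⟩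
  invFun p := ⟨Fin.cons p.1.1 p.2.1, by
    constructor
    · intro i j hij
      induction j using Fin.cases with
      | zero => exact absurd hij (Fin.not_lt_zero i)
      | succ j' =>
        induction i using Fin.cases with
        | zero =>
          rw [Fin.cons_zero, Fin.cons_succ]
          exact p.2.2.2 j'
        | succ i' =>
          rw [Fin.cons_succ, Fin.cons_succ]
          exact p.2.2.1 (by simpa [Fin.succ_lt_succ_iff] using hij)
    · intro i
      induction i using Fin.cases with
      | zero => rw [Fin.cons_zero]; exact p.1.2
      | succ i' =>
        rw [Fin.cons_succ]
        exact lt_trans p.1.2 (p.2.2.2 i')⟩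
  left_inv a := Subtype.ext (Fin.cons_self_tail a.1)
  right_inv p := by
    rcases p with ⟨⟨m, hm⟩, b, hb⟩
    rfl

lemma main_aux : ∀ (k : ℕ) (a₀ : ℤ) (x : Fin k → ℝ), (∀ i, 1 < x i) →
    HasSum (fun a : {a : Fin k → ℤ // StrictMono a ∧ ∀ i, a₀ < a i} =>
        ∏ i : Fin k, 1 / x i ^ (a.1 i))
      ((1 / (∏ i : Fin k, x i) ^ a₀) *
        ∏ j : Fin k, 1 / ((∏ i ∈ Finset.Ici j, x i) - 1)) := by
  intro k
  induction k with
  | zero =>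
    intro a₀ x hx
    have hb : ({a : Fin 0 → ℤ // StrictMono a ∧ ∀ i, a₀ < a i}) :=
      ⟨Fin.elim0, fun i _ _ => i.elim0, fun i => i.elim0⟩
    have h := hasSum_single (f := fun a : {a : Fin 0 → ℤ // StrictMono a ∧ ∀ i, a₀ < a i} =>
        ∏ i : Fin 0, 1 / x i ^ (a.1 i)) hb
      (fun b' hb' => absurd (Subtype.ext (funext fun i => i.elim0)) hb')
    simpa using h
  | succ k IH =>
    intro a₀ x hx
    have hx0 : (1:ℝ) < x 0 := hx 0
    have hx00 : (0:ℝ) < x 0 := by linarith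
    have hxs : ∀ i : Fin k, 1 < x i.succ := fun i => hx _
    have hP1 : (1:ℝ) ≤ ∏ i : Fin k, x i.succ := by
      have := Finset.prod_le_prod (s := (Finset.univ : Finset (Fin k)))
        (f := fun _ => (1:ℝ)) (g := fun i => x i.succ)
        (fun i _ => zero_le_one) (fun i _ => le_of_lt (hxs i))
      simpa using this
    set P := ∏ i : Fin k, x i.succ with hPdef
    have hx0P : (1:ℝ) < x 0 * P :=
      lt_of_lt_of_le hx0 (le_mul_of_one_le_right (le_of_lt hx00) hP1)
    set Q := ∏ j : Fin k, 1 / ((∏ i ∈ Finset.Ici j, x i.succ) - 1) with hQdef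
    have hfib : ∀ m : {m : ℤ // a₀ < m},
        HasSum (fun b : {b : Fin k → ℤ // StrictMono b ∧ ∀ i, m.1 < b i} =>
          (1 / x 0 ^ m.1) * ∏ i : Fin k, 1 / x i.succ ^ (b.1 i))
          ((1 / x 0 ^ m.1) * ((1 / P ^ m.1) * Q)) := by
      intro m
      have := (IH m.1 (fun i => x i.succ) hxs).mul_left (1 / x 0 ^ m.1)
      rw [← mul_assoc] at this
      rw [← mul_assoc]
      exact this
    have houter : HasSum (fun m : {m : ℤ // a₀ < m} => (1 / (x 0 * P) ^ m.1) * Q)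
        ((1 / (x 0 * P) ^ a₀ * (1 / (x 0 * P - 1))) * Q) :=
      (geom_above a₀ hx0P).mul_right Q
    set g : (Σ m : {m : ℤ // a₀ < m},
        {b : Fin k → ℤ // StrictMono b ∧ ∀ i, m.1 < b i}) → ℝ :=
      fun p => (1 / x 0 ^ p.1.1) * ∏ i : Fin k, 1 / x i.succ ^ (p.2.1 i) with hgdef
    have hgpos : ∀ p, 0 ≤ g p := by
      intro p
      apply mul_nonneg
      · positivity
      · exact Finset.prod_nonneg fun i _ => by
          have : (0:ℝ) < x i.succ := lt_trans one_pos (hxs i)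
          positivity
    have hgval : ∀ m : ℤ, (1 / x 0 ^ m) * ((1 / P ^ m) * Q) = (1 / (x 0 * P) ^ m) * Q := by
      intro m
      rw [mul_zpow, ← mul_assoc, div_mul_div_comm, one_mul]
    have hsummable : Summable g := by
      rw [summable_sigma_of_nonneg hgpos]
      refine ⟨fun m => (hfib m).summable, ?_⟩
      have : (fun m : {m : ℤ // a₀ < m} => ∑' b, g ⟨m, b⟩) =
          fun m => (1 / (x 0 * P) ^ m.1) * Q := by
        funext m
        rw [(hfib m).tsum_eq, hgval]
      rw [this]
      exact houter.summable
    have hg : HasSum g ((1 / (x 0 * P) ^ a₀ * (1 / (x 0 * P - 1))) * Q) := by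
      refine HasSum.sigma_of_hasSum ?_ (fun m => hfib m) hsummable
      have : (fun m : {m : ℤ // a₀ < m} => (1 / x 0 ^ m.1) * ((1 / P ^ m.1) * Q)) =
          fun m => (1 / (x 0 * P) ^ m.1) * Q := funext fun m => hgval m.1
      rw [this]
      exact houter
    have hcomp : (fun a : {a : Fin (k+1) → ℤ // StrictMono a ∧ ∀ i, a₀ < a i} =>
        ∏ i : Fin (k+1), 1 / x i ^ (a.1 i)) = g ∘ (tailEquiv k a₀) := by
      funext a
      show _ = (1 / x 0 ^ (a.1 0)) * ∏ i : Fin k, 1 / x i.succ ^ (a.1 i.succ)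
      rw [Fin.prod_univ_succ]
    have hval : (1 / (∏ i : Fin (k+1), x i) ^ a₀) *
        ∏ j : Fin (k+1), 1 / ((∏ i ∈ Finset.Ici j, x i) - 1) =
        (1 / (x 0 * P) ^ a₀ * (1 / (x 0 * P - 1))) * Q := by
      rw [Fin.prod_univ_succ x, Fin.prod_univ_succ
        (fun j : Fin (k+1) => 1 / ((∏ i ∈ Finset.Ici j, x i) - 1))]
      rw [Ici_zero_fin, Fin.prod_univ_succ x]
      have : ∀ j : Fin k, (1:ℝ) / ((∏ i ∈ Finset.Ici j.succ, x i) - 1) =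
          1 / ((∏ i ∈ Finset.Ici j, x i.succ) - 1) := fun j => by rw [prod_Ici_succ]
      simp_rw [this]
      ring
    rw [hcomp, hval]
    exact ((tailEquiv k a₀).hasSum_iff).mpr hg

theorem stmt_11 (k : ℕ) (hk : 1 ≤ k) (a₀ : ℤ) (x : Fin k → ℝ) (hx : ∀ i, 1 < x i) :
    (∑' a : {a : Fin k → ℤ // StrictMono a ∧ ∀ i, a₀ < a i},
        ∏ i : Fin k, 1 / x i ^ (a.1 i)) =
      (1 / (∏ i : Fin k, x i) ^ a₀) *
        ∏ j : Fin k, 1 / ((∏ i ∈ Finset.Ici j, x i) - 1) :=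
  (main_aux k a₀ x hx).tsum_eq
end

section
/- Let k ≥ 2 be an integer and let n > 1 be a squarefree natural number. Then Σ ∏_{j=1}^{k−1} 1/(m_j m_{j+1} ⋯ m_{k−1} − 1) = ρ_k(n), where the sum ranges over all ordered tuples (m_1, …, m_{k−1}) of pairwise coprime squarefree integers, each greater than 1, with m_1 ⋯ m_{k−1} = n. -/
open Finset
open scoped Classical

lemma aux_prod_Ici_zero {M : Type*} [CommMonoid M] {r : ℕ} (f : Fin (r+1) → M) :
    ∏ i ∈ Ici (0 : Fin (r+1)), f i = ∏ i, f i := by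
  congr 1
  ext i
  simp [Fin.zero_le]

lemma aux_prod_Ici_succ {M : Type*} [CommMonoid M] {r : ℕ} (f : Fin (r+1) → M) (j : Fin r) :
    ∏ i ∈ Ici j.succ, f i = ∏ i ∈ Ici j, f i.succ := by
  have h : (Ici j.succ) = (Ici j).map (Fin.succEmb r) := by
    ext i
    simp only [mem_Ici, mem_map, Fin.succEmb, Function.Embedding.coeFn_mk]
    constructor
    · intro hi
      have h0 : i ≠ 0 := by
        rintro rfl
        exact absurd hi (by simp [Fin.le_def])
      refine ⟨i.pred h0, ?_, by simp⟩
      rw [← Fin.succ_le_succ_iff, Fin.succ_pred]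
      exact hi
    · rintro ⟨x, hx, rfl⟩
      exact Fin.succ_le_succ_iff.mpr hx
  rw [h, Finset.prod_map]
  rfl


noncomputable def Ssum (r n : ℕ) : ℝ :=
  ∑ m ∈ Fintype.piFinset (fun _ : Fin r => n.divisors),
    if (∀ i, 1 < m i) ∧ ∏ i, m i = n then
      ∏ j : Fin r, 1 / ((∏ i ∈ Ici j, (m i : ℝ)) - 1) else 0

lemma Ssum_one (r : ℕ) : Ssum (r+1) 1 = 0 := by
  unfold Ssum
  refine Finset.sum_eq_zero fun m hm => ?_
  rw [if_neg]
  rintro ⟨h1, h2⟩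
  have : m 0 ∣ ∏ i, m i := Finset.dvd_prod_of_mem m (mem_univ 0)
  rw [h2, Nat.dvd_one] at this
  exact absurd this (h1 0).ne'

lemma Ssum_restrict (r n d : ℕ) (hn : n ≠ 0) (hd : d ∣ n) :
    (∑ m ∈ Fintype.piFinset (fun _ : Fin r => n.divisors),
      if (∀ i, 1 < m i) ∧ ∏ i, m i = d then
        ∏ j : Fin r, 1 / ((∏ i ∈ Ici j, (m i : ℝ)) - 1) else 0) = Ssum r d := by
  have hd0 : d ≠ 0 := fun h => hn (Nat.eq_zero_of_zero_dvd (h ▸ hd))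
  unfold Ssum
  refine (Finset.sum_subset ?_ ?_).symm
  · intro m hm
    rw [Fintype.mem_piFinset] at hm ⊢
    intro i
    exact Nat.mem_divisors.2 ⟨(Nat.mem_divisors.1 (hm i)).1.trans hd, hn⟩
  · intro m hm hm'
    rw [if_neg]
    rintro ⟨h1, h2⟩
    refine hm' ?_
    rw [Fintype.mem_piFinset]
    intro i
    exact Nat.mem_divisors.2 ⟨h2 ▸ Finset.dvd_prod_of_mem m (mem_univ i), hd0⟩

lemma Ssum_eq_rho (r : ℕ) : ∀ n : ℕ, Squarefree n → Ssum (r+1) n = rho (r+2) n := by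
  induction r with
  | zero =>
    intro n hsq
    have hn0 : n ≠ 0 := hsq.ne_zero
    rcases eq_or_ne n 1 with rfl | hn1
    · rw [Ssum_one]
      simp [rho]
    · have hn : 1 < n := lt_of_le_of_ne (Nat.one_le_iff_ne_zero.2 hn0) (Ne.symm hn1)
      unfold Ssum
      rw [Finset.sum_eq_single_of_mem (fun _ => n)]
      · rw [if_pos ⟨fun _ => hn, by simp⟩]
        rw [Fin.prod_univ_one, aux_prod_Ici_zero, Fin.prod_univ_one]
        rw [rho, if_neg (by simp [hn1, hsq])]
        have : ∑ d ∈ n.divisors.filter (· < n), rho 1 d = 1 := by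
          rw [Finset.sum_eq_single_of_mem 1]
          · simp [rho]
          · simp [Nat.mem_divisors, hn0, hn]
          · intro d _ hd1
            simp [rho, hd1]
        rw [this, mul_one]
      · rw [Fintype.mem_piFinset]
        intro i
        exact Nat.mem_divisors_self n hn0
      · intro m hm hmne
        rw [if_neg]
        rintro ⟨h1, h2⟩
        rw [Fin.prod_univ_one] at h2
        exact hmne (funext fun i => by rw [Fin.eq_zero i, h2])
  | succ r ih =>
    intro n hsq
    have hn0 : n ≠ 0 := hsq.ne_zero
    rcases eq_or_ne n 1 with rfl | hn1
    · rw [Ssum_one]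
      simp [rho]
    · have hn : 1 < n := lt_of_le_of_ne (Nat.one_le_iff_ne_zero.2 hn0) (Ne.symm hn1)
      -- decompose the sum
      have key : Ssum (r+2) n =
          ∑ a ∈ n.divisors, ∑ t ∈ Fintype.piFinset (fun _ : Fin (r+1) => n.divisors),
            (if (∀ i, 1 < (Fin.cons a t : Fin (r+2) → ℕ) i) ∧
                 ∏ i, (Fin.cons a t : Fin (r+2) → ℕ) i = n then
              ∏ j : Fin (r+2), 1 / ((∏ i ∈ Ici j, ((Fin.cons a t : Fin (r+2) → ℕ) i : ℝ)) - 1)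
             else 0) := by
        unfold Ssum
        rw [← Finset.sum_product']
        refine Finset.sum_nbij' (fun m => (m 0, Fin.tail m)) (fun p => Fin.cons p.1 p.2) ?_ ?_ ?_ ?_ ?_
        · intro m hm
          rw [Fintype.mem_piFinset] at hm
          exact Finset.mem_product.2 ⟨hm 0, Fintype.mem_piFinset.2 fun i => hm i.succ⟩
        · intro p hp
          rw [Finset.mem_product] at hp
          rw [Fintype.mem_piFinset]
          intro i
          refine Fin.cases ?_ ?_ i
          · simpa using hp.1
          · intro j
            simpa using Fintype.mem_piFinset.1 hp.2 j
        · intro m hm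
          exact Fin.cons_self_tail m
        · intro p hp
          simp [Fin.tail_cons]
        · intro m hm
          rw [Fin.cons_self_tail m]
      rw [key]
      have inner : ∀ a ∈ n.divisors,
          (∑ t ∈ Fintype.piFinset (fun _ : Fin (r+1) => n.divisors),
            (if (∀ i, 1 < (Fin.cons a t : Fin (r+2) → ℕ) i) ∧
                 ∏ i, (Fin.cons a t : Fin (r+2) → ℕ) i = n then
              ∏ j : Fin (r+2), 1 / ((∏ i ∈ Ici j, ((Fin.cons a t : Fin (r+2) → ℕ) i : ℝ)) - 1)
             else 0)) = if 1 < a then (1 / ((n:ℝ) - 1)) * rho (r+2) (n / a) else 0 := by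
        intro a ha
        have hadvd : a ∣ n := (Nat.mem_divisors.1 ha).1
        have ha0 : 0 < a := Nat.pos_of_mem_divisors ha
        by_cases h1a : 1 < a
        · rw [if_pos h1a]
          have hdvd : n / a ∣ n := Nat.div_dvd_of_dvd hadvd
          rw [← ih (n / a) (hsq.squarefree_of_dvd hdvd),
            ← Ssum_restrict (r+1) n (n / a) hn0 hdvd, Finset.mul_sum]
          refine Finset.sum_congr rfl fun t ht => ?_
          by_cases hc : (∀ i, 1 < t i) ∧ ∏ i, t i = n / a
          · have hprod : ∏ i, (Fin.cons a t : Fin (r+2) → ℕ) i = n := by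
              rw [Fin.prod_cons, hc.2, Nat.mul_div_cancel' hadvd]
            rw [if_pos ⟨fun i => Fin.cases h1a (fun j => by simpa using hc.1 j) i, hprod⟩,
              if_pos hc, Fin.prod_univ_succ]
            congr 1
            · congr 2
              rw [aux_prod_Ici_zero (fun i => ((Fin.cons a t : Fin (r+2) → ℕ) i : ℝ)),
                ← Nat.cast_prod, hprod]
            · refine Finset.prod_congr rfl fun j _ => ?_
              congr 2
              rw [aux_prod_Ici_succ (fun i => ((Fin.cons a t : Fin (r+2) → ℕ) i : ℝ)) j]
              exact Finset.prod_congr rfl fun i _ => by simp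
          · rw [if_neg, if_neg hc, mul_zero]
            rintro ⟨hb1, hb2⟩
            refine hc ⟨fun i => by simpa using hb1 i.succ, ?_⟩
            rw [Fin.prod_cons] at hb2
            rw [← hb2, Nat.mul_div_cancel_left _ ha0]
        · rw [if_neg h1a]
          refine Finset.sum_eq_zero fun t ht => ?_
          rw [if_neg]
          rintro ⟨hb1, _⟩
          exact h1a (by simpa using hb1 0)
      rw [Finset.sum_congr rfl inner]
      have step2 : ∑ a ∈ n.divisors, (if 1 < a then (1 / ((n:ℝ) - 1)) * rho (r+2) (n / a) else 0)
          = (1 / ((n:ℝ) - 1)) * ∑ a ∈ n.divisors,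
              (if n / a < n then rho (r+2) (n / a) else 0) := by
        rw [Finset.mul_sum]
        refine Finset.sum_congr rfl fun a ha => ?_
        have hadvd : a ∣ n := (Nat.mem_divisors.1 ha).1
        have ha0 : 0 < a := Nat.pos_of_mem_divisors ha
        have hiff : 1 < a ↔ n / a < n := by
          constructor
          · intro h
            exact Nat.div_lt_self (by omega) h
          · intro h
            by_contra hle
            have : a = 1 := by omega
            subst this
            simp at h
        by_cases h : 1 < a
        · rw [if_pos h, if_pos (hiff.mp h)]
        · rw [if_neg h, if_neg (fun hh => h (hiff.mpr hh)), mul_zero]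
      rw [step2, Nat.sum_div_divisors n (fun d => if d < n then rho (r+2) d else 0),
        ← Finset.sum_filter]
      rw [rho, if_neg (by simp [hn1, hsq])]

lemma main_aux_s13 (r : ℕ) (n : ℕ) (hn : 1 < n) (hsq : Squarefree n) :
    (∑' m : {m : Fin (r + 1) → ℕ //
        (∀ i, 1 < m i ∧ Squarefree (m i)) ∧
        (∀ i j, i ≠ j → Nat.Coprime (m i) (m j)) ∧
        ∏ i, m i = n},
      ∏ j : Fin (r + 1), 1 / ((∏ i ∈ Finset.Ici j, (m.1 i : ℝ)) - 1)) = rho (r + 2) n := by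
  have hn0 : n ≠ 0 := hsq.ne_zero
  set s : Finset (Fin (r+1) → ℕ) :=
    (Fintype.piFinset (fun _ : Fin (r+1) => n.divisors)).filter
      (fun m => (∀ i, 1 < m i) ∧ ∏ i, m i = n) with hs
  have heq : ∀ m : Fin (r+1) → ℕ,
      ((∀ i, 1 < m i ∧ Squarefree (m i)) ∧
        (∀ i j, i ≠ j → Nat.Coprime (m i) (m j)) ∧ ∏ i, m i = n) ↔ m ∈ s := by
    intro m
    rw [hs, Finset.mem_filter, Fintype.mem_piFinset]
    constructor
    · rintro ⟨h1, _, h3⟩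
      exact ⟨fun i => Nat.mem_divisors.2 ⟨h3 ▸ Finset.dvd_prod_of_mem m (mem_univ i), hn0⟩,
        fun i => (h1 i).1, h3⟩
    · rintro ⟨_, h1, h3⟩
      have hdvd : ∀ i, m i ∣ n := fun i => h3 ▸ Finset.dvd_prod_of_mem m (mem_univ i)
      refine ⟨fun i => ⟨h1 i, hsq.squarefree_of_dvd (hdvd i)⟩, ?_, h3⟩
      intro i j hij
      have hmul : m i * m j ∣ n := by
        rw [← h3, ← Finset.prod_pair hij]
        exact Finset.prod_dvd_prod_of_subset _ _ m (Finset.subset_univ _)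
      have : Nat.gcd (m i) (m j) * Nat.gcd (m i) (m j) ∣ n :=
        (mul_dvd_mul (Nat.gcd_dvd_left _ _) (Nat.gcd_dvd_right _ _)).trans hmul
      exact Nat.isUnit_iff.mp (hsq _ this)
  refine Eq.trans (Equiv.tsum_eq (Equiv.subtypeEquivRight heq) (fun x : {m // m ∈ s} =>
    ∏ j : Fin (r + 1), 1 / ((∏ i ∈ Finset.Ici j, (x.1 i : ℝ)) - 1))) ?_
  rw [Finset.tsum_subtype s (fun m =>
    ∏ j : Fin (r + 1), 1 / ((∏ i ∈ Finset.Ici j, (m i : ℝ)) - 1))]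
  rw [hs, Finset.sum_filter]
  exact Ssum_eq_rho r n hsq

theorem stmt_13 (k : ℕ) (hk : 2 ≤ k) (n : ℕ) (hn : 1 < n) (hsq : Squarefree n) :
    (∑' m : {m : Fin (k - 1) → ℕ //
        (∀ i, 1 < m i ∧ Squarefree (m i)) ∧
        (∀ i j, i ≠ j → Nat.Coprime (m i) (m j)) ∧
        ∏ i, m i = n},
      ∏ j : Fin (k - 1), 1 / ((∏ i ∈ Finset.Ici j, (m.1 i : ℝ)) - 1)) = rho k n := by
  obtain ⟨r, rfl⟩ : ∃ r, k = r + 2 := ⟨k - 2, by omega⟩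
  exact main_aux_s13 r n hn hsq
end
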